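/- arXiv:1105.5967 — 4 statements merged into one kernel-verified Lean document; each statement's English description precedes it below -/
import Mathlib

section
/- Let ν ≥ 0 be real and let b_ν(x) = ∑_{k=0}^∞ [Γ(ν+k+1)/Γ(2ν+k+1)] x^k/k!. Then for every complex x ≠ 0 (with a fixed branch of x^{1/2-ν}), b_ν(x) = (√π/2) · x^{1/2-ν} e^{x/2} [I_{ν-1/2}(x/2) + I_{ν+1/2}(x/2)], where I_μ(z) = ∑_{k=0}^∞ (z/2)^{2k+μ}/(k! Γ(k+μ+1)) is the modified Bessel function of the first kind. -/
/-!
Up to the constant `Γ(ν+1)/Γ(2ν+1)`, `b_ν` is Kummer's function `M(ν+1, 2ν+1, x)`, so its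
Taylor coefficients are determined by their value at `0` and a first-order recurrence.
Writing `b_ν = e^{x/2} f`, Kummer's equation becomes `x f'' + (2ν+1) f' = (1/2 + x/4) f`, and
a power series solution `f` is read off from the two Bessel functions: its even part is
`x^{1/2-ν} I_{ν-1/2}(x/2)`, its odd part `x^{1/2-ν} I_{ν+1/2}(x/2)`, up to a common factor.
So the Cauchy product of the coefficients of `e^{x/2}` and of `f` satisfies the Kummer
recurrence, and the constant terms match by Legendre's duplication formula. Convergence comes
for free: the Cauchy product dominates the coefficients of `f`, and Kummer coefficients decay
like `1/n!`.
-/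

/-- The modified Bessel function of the first kind of (real) order `μ`,
defined by its power series `I_μ(z) = ∑_{k} (z/2)^(2k+μ) / (k! Γ(k+μ+1))`,
with the principal branch of the complex power. -/
noncomputable def besselI (μ : ℝ) (z : ℂ) : ℂ :=
  ∑' k : ℕ, (z / 2) ^ (2 * (k : ℂ) + (μ : ℂ)) /
    ((k.factorial : ℂ) * Complex.Gamma ((k : ℂ) + (μ : ℂ) + 1))

/-- The auxiliary entire function `b_ν(x) = ∑_k [Γ(ν+k+1)/Γ(2ν+k+1)] x^k/k!`. -/
noncomputable def bFun (ν : ℝ) (x : ℂ) : ℂ :=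
  ∑' k : ℕ, ((Real.Gamma (ν + k + 1) / Real.Gamma (2 * ν + k + 1) : ℝ) : ℂ) *
    x ^ k / (k.factorial : ℂ)

open Finset Nat

/-- The recurrence of the Taylor coefficients of Kummer's function `M(a, b, ·)`. -/
def IsKummerCoeff (a b : ℝ) (u : ℕ → ℝ) : Prop :=
  ∀ n : ℕ, (n + 1) * (b + n) * u (n + 1) = (a + n) * u n

namespace IsKummerCoeff

variable {a b : ℝ} {u v : ℕ → ℝ}

lemma const_mul (hu : IsKummerCoeff a b u) (K : ℝ) : IsKummerCoeff a b (fun n => K * u n) :=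
  fun n => by linear_combination K * hu n

lemma unique (hb : 0 < b) (hu : IsKummerCoeff a b u) (hv : IsKummerCoeff a b v)
    (h₀ : u 0 = v 0) : u = v := by
  funext n
  induction n with
  | zero => exact h₀
  | succ n ih =>
    have hne : ((n : ℝ) + 1) * (b + n) ≠ 0 := by positivity
    exact mul_left_cancel₀ hne (by rw [hu n, hv n, ih])

lemma le_div_factorial (hab : a ≤ b) (hb : 0 < b) (hu : IsKummerCoeff a b u)
    (hu₀ : ∀ n, 0 ≤ u n) (n : ℕ) : u n ≤ u 0 / n ! := by
  induction n with
  | zero => simp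
  | succ n ih =>
    have hbn : 0 < b + n := by positivity
    have hstep : (b + n) * ((n + 1) * u (n + 1)) ≤ (b + n) * (u 0 / n !) := by
      linear_combination hu n + (b + n) * ih + (b - a) * hu₀ n
    rw [factorial_succ, cast_mul, mul_comm, ← div_div, le_div_iff₀ (by positivity), mul_comm]
    exact_mod_cast le_of_mul_le_mul_left hstep hbn

end IsKummerCoeff

noncomputable def expHalfCoeff (i : ℕ) : ℝ := (2 ^ i * i !)⁻¹

lemma expHalfCoeff_nonneg (i : ℕ) : 0 ≤ expHalfCoeff i := by
  unfold expHalfCoeff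
  positivity

lemma expHalfCoeff_succ (i : ℕ) : (i + 1) * expHalfCoeff (i + 1) = expHalfCoeff i / 2 := by
  simp only [expHalfCoeff, factorial_succ, pow_succ, cast_mul, cast_succ]
  field_simp

lemma sum_antidiagonal_succ_fst_mul_expHalfCoeff (w : ℕ → ℝ) (n : ℕ) :
    ∑ p ∈ antidiagonal (n + 1), (p.1 : ℝ) * expHalfCoeff p.1 * w p.2 =
      (∑ p ∈ antidiagonal n, expHalfCoeff p.1 * w p.2) / 2 := by
  rw [Nat.sum_antidiagonal_succ, sum_div]
  simp only [cast_zero, zero_mul, zero_add, cast_add, cast_one, expHalfCoeff_succ]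
  exact sum_congr rfl fun p _ => by ring

section CauchyProduct

/- The hypotheses `h₁`, `h₂` on `a` are the coefficient form of
`x f'' + (2ν+1) f' = (1/2 + x/4) f`, which is Kummer's equation for `e^{x/2} f`. -/
variable {ν : ℝ} {a : ℕ → ℝ} (h₁ : (2 * ν + 1) * a 1 = a 0 / 2)
  (h₂ : ∀ j : ℕ, (j + 2) * (2 * ν + j + 2) * a (j + 2) = a (j + 1) / 2 + a j / 4)
include h₁ h₂

lemma sum_antidiagonal_succ_snd_mul_expHalfCoeff (n : ℕ) :
    ∑ p ∈ antidiagonal (n + 1), (p.2 : ℝ) * (2 * ν + p.2) * (expHalfCoeff p.1 * a p.2) =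
      (∑ p ∈ antidiagonal n, expHalfCoeff p.1 * a p.2) / 2 +
        (∑ p ∈ antidiagonal n, (p.1 : ℝ) * expHalfCoeff p.1 * a p.2) / 2 := by
  rcases n with _ | m
  · simp [Nat.sum_antidiagonal_succ', expHalfCoeff, h₁]
  · have key : ∀ p ∈ antidiagonal m,
        ((p.2 + 1 + 1 : ℕ) : ℝ) * (2 * ν + (p.2 + 1 + 1 : ℕ)) * (expHalfCoeff p.1 * a (p.2 + 1 + 1)) =
          expHalfCoeff p.1 * a (p.2 + 1) / 2 + expHalfCoeff p.1 * a p.2 / 4 := by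
      intro p _
      push_cast
      linear_combination expHalfCoeff p.1 * h₂ p.2
    rw [sum_antidiagonal_succ_fst_mul_expHalfCoeff, Nat.sum_antidiagonal_succ',
      Nat.sum_antidiagonal_succ', Nat.sum_antidiagonal_succ' (n := m)]
    simp only [sum_congr rfl key, sum_add_distrib, ← sum_div]
    push_cast
    linear_combination expHalfCoeff (m + 1) * h₁

lemma isKummerCoeff_expHalfCoeff_mul :
    IsKummerCoeff (ν + 1) (2 * ν + 1)
      (fun n => ∑ p ∈ antidiagonal n, expHalfCoeff p.1 * a p.2) := by
  intro n
  have hsplit : ∀ p ∈ antidiagonal (n + 1),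
      ((n : ℝ) + 1) * (2 * ν + 1 + n) * (expHalfCoeff p.1 * a p.2) =
        p.2 * (2 * ν + p.2) * (expHalfCoeff p.1 * a p.2) +
          (2 * ν + n + 1 + p.2) * (p.1 * expHalfCoeff p.1 * a p.2) := by
    intro p hp
    have hpn : (p.1 : ℝ) + p.2 = n + 1 := by exact_mod_cast mem_antidiagonal.mp hp
    linear_combination -(2 * ν + n + 1 + p.2) * (expHalfCoeff p.1 * a p.2) * hpn
  rw [mul_sum, sum_congr rfl hsplit, sum_add_distrib,
    sum_antidiagonal_succ_snd_mul_expHalfCoeff h₁ h₂, Nat.sum_antidiagonal_succ]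
  simp only [cast_zero, zero_mul, mul_zero, zero_add]
  rw [mul_sum, sum_div, sum_div, ← sum_add_distrib, ← sum_add_distrib]
  refine sum_congr rfl fun p hp => ?_
  have hpn : (p.1 : ℝ) + p.2 = n := by exact_mod_cast mem_antidiagonal.mp hp
  have he := expHalfCoeff_succ p.1
  push_cast
  linear_combination (2 * ν + n + 1 + p.2) * a p.2 * he + expHalfCoeff p.1 * a p.2 / 2 * hpn

end CauchyProduct

/- `x^{1/2-ν} (I_{ν-1/2}(x/2) + I_{ν+1/2}(x/2)) = 2·4^{-ν} ∑ besselCoeff ν n x^n`, the even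
coefficients coming from `I_{ν-1/2}` and the odd ones from `I_{ν+1/2}`. -/
noncomputable def besselCoeff (ν : ℝ) (n : ℕ) : ℝ :=
  (4 ^ n * (n / 2)! * Real.Gamma (((n + 1) / 2 : ℕ) + ν + 1 / 2))⁻¹

lemma besselCoeff_two_mul (ν : ℝ) (k : ℕ) :
    besselCoeff ν (2 * k) = (4 ^ (2 * k) * k ! * Real.Gamma (k + ν + 1 / 2))⁻¹ := by
  rw [besselCoeff, show 2 * k / 2 = k by omega, show (2 * k + 1) / 2 = k by omega]

lemma besselCoeff_two_mul_add_one (ν : ℝ) (k : ℕ) :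
    besselCoeff ν (2 * k + 1) = (4 ^ (2 * k + 1) * k ! * Real.Gamma (k + ν + 1 / 2 + 1))⁻¹ := by
  rw [besselCoeff, show (2 * k + 1) / 2 = k by omega, show (2 * k + 1 + 1) / 2 = k + 1 by omega]
  push_cast
  ring_nf

noncomputable def bFunCoeff (ν : ℝ) (n : ℕ) : ℝ :=
  Real.Gamma (ν + n + 1) / Real.Gamma (2 * ν + n + 1) / n !

lemma bFun_eq_tsum (ν : ℝ) (x : ℂ) : bFun ν x = ∑' n, (bFunCoeff ν n : ℂ) * x ^ n :=
  tsum_congr fun n => by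
    simp only [bFunCoeff]
    push_cast
    ring

section

variable {ν : ℝ} (hν : 0 ≤ ν)
include hν

lemma besselCoeff_two_mul_add_one_rec (k : ℕ) :
    2 * (2 * ν + 2 * k + 1) * besselCoeff ν (2 * k + 1) = besselCoeff ν (2 * k) := by
  have hs : (k : ℝ) + ν + 1 / 2 ≠ 0 := by positivity
  have hΓ : Real.Gamma (k + ν + 1 / 2) ≠ 0 := (Real.Gamma_pos_of_pos (by positivity)).ne'
  rw [besselCoeff_two_mul, besselCoeff_two_mul_add_one, Real.Gamma_add_one hs, pow_succ]
  field_simp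
  ring

lemma besselCoeff_two_mul_add_two_rec (k : ℕ) :
    4 * (k + 1) * besselCoeff ν (2 * k + 2) = besselCoeff ν (2 * k + 1) := by
  have hΓ : Real.Gamma (k + ν + 1 / 2 + 1) ≠ 0 := (Real.Gamma_pos_of_pos (by positivity)).ne'
  rw [show 2 * k + 2 = 2 * (k + 1) by ring, besselCoeff_two_mul, besselCoeff_two_mul_add_one,
    factorial_succ, show 2 * (k + 1) = 2 * k + 1 + 1 by ring, pow_succ _ (2 * k + 1)]
  push_cast
  field_simp
  ring_nf

lemma besselCoeff_one_rec : (2 * ν + 1) * besselCoeff ν 1 = besselCoeff ν 0 / 2 := by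
  linear_combination besselCoeff_two_mul_add_one_rec hν 0 / 2

lemma besselCoeff_add_two_rec (j : ℕ) :
    (j + 2) * (2 * ν + j + 2) * besselCoeff ν (j + 2) =
      besselCoeff ν (j + 1) / 2 + besselCoeff ν j / 4 := by
  obtain ⟨k, rfl | rfl⟩ := j.even_or_odd'
  · have h₁ := besselCoeff_two_mul_add_one_rec hν k
    have h₂ := besselCoeff_two_mul_add_two_rec hν k
    push_cast
    linear_combination (2 * ν + 2 * k + 2) / 2 * h₂ + h₁ / 4
  · have h₁ := besselCoeff_two_mul_add_two_rec hν k
    have h₂ := besselCoeff_two_mul_add_one_rec hν (k + 1)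
    push_cast at h₂ ⊢
    linear_combination (2 * k + 3) / 2 * h₂ + h₁ / 4

lemma besselCoeff_nonneg (n : ℕ) : 0 ≤ besselCoeff ν n := by
  have := Real.Gamma_pos_of_pos (show 0 < (((n + 1) / 2 : ℕ) : ℝ) + ν + 1 / 2 by positivity)
  unfold besselCoeff
  positivity

lemma isKummerCoeff_bFunCoeff : IsKummerCoeff (ν + 1) (2 * ν + 1) (bFunCoeff ν) := by
  intro n
  have h₁ : Real.Gamma (ν + (n + 1 : ℕ) + 1) = (ν + n + 1) * Real.Gamma (ν + n + 1) := by
    rw [← Real.Gamma_add_one (by positivity)]; push_cast; ring_nf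
  have h₂ : Real.Gamma (2 * ν + (n + 1 : ℕ) + 1) =
      (2 * ν + n + 1) * Real.Gamma (2 * ν + n + 1) := by
    rw [← Real.Gamma_add_one (by positivity)]; push_cast; ring_nf
  have hΓ : Real.Gamma (2 * ν + n + 1) ≠ 0 := (Real.Gamma_pos_of_pos (by positivity)).ne'
  have hb : 2 * ν + n + 1 ≠ 0 := by positivity
  rw [bFunCoeff, bFunCoeff, h₁, h₂, factorial_succ]
  push_cast
  field_simp
  ring

lemma bFunCoeff_zero : bFunCoeff ν 0 = Real.sqrt Real.pi / 4 ^ ν * besselCoeff ν 0 := by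
  have hdup := Real.Gamma_mul_Gamma_add_half (ν + 1 / 2)
  rw [show ν + 1 / 2 + 1 / 2 = ν + 1 by ring, show 2 * (ν + 1 / 2) = 2 * ν + 1 by ring,
    show 1 - (2 * ν + 1) = -(2 * ν) by ring] at hdup
  have h4 : (4 : ℝ) ^ ν = 2 ^ (2 * ν) := by
    rw [show (4 : ℝ) = 2 ^ (2 : ℝ) by norm_num, ← Real.rpow_mul zero_le_two]
  have hΓ₁ : Real.Gamma (ν + 1 / 2) ≠ 0 := (Real.Gamma_pos_of_pos (by positivity)).ne'
  simp only [bFunCoeff, besselCoeff, CharP.cast_eq_zero, add_zero, factorial_zero, cast_one,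
    div_one, pow_zero, one_mul, zero_add, Nat.reduceDiv]
  rw [h4, ← mul_div_mul_left _ _ hΓ₁, hdup, Real.rpow_neg zero_le_two]
  field_simp

lemma bFunCoeff_eq_sqrt_pi_mul_sum :
    bFunCoeff ν = fun n => Real.sqrt Real.pi / 4 ^ ν *
      ∑ p ∈ antidiagonal n, expHalfCoeff p.1 * besselCoeff ν p.2 :=
  (isKummerCoeff_bFunCoeff hν).unique (by linarith)
    ((isKummerCoeff_expHalfCoeff_mul (besselCoeff_one_rec hν)
      (besselCoeff_add_two_rec hν)).const_mul _)
    (by simp [bFunCoeff_zero hν, expHalfCoeff])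

lemma besselCoeff_le_div_factorial (n : ℕ) : besselCoeff ν n ≤ besselCoeff ν 0 / n ! := by
  have hc := isKummerCoeff_expHalfCoeff_mul (besselCoeff_one_rec hν) (besselCoeff_add_two_rec hν)
  have hterm : ∀ m : ℕ, ∀ p ∈ antidiagonal m, 0 ≤ expHalfCoeff p.1 * besselCoeff ν p.2 :=
    fun _ p _ => mul_nonneg (expHalfCoeff_nonneg p.1) (besselCoeff_nonneg hν p.2)
  calc besselCoeff ν n
      = expHalfCoeff 0 * besselCoeff ν n := by simp [expHalfCoeff]
    _ ≤ ∑ p ∈ antidiagonal n, expHalfCoeff p.1 * besselCoeff ν p.2 :=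
        single_le_sum (f := fun p : ℕ × ℕ => expHalfCoeff p.1 * besselCoeff ν p.2) (hterm n)
          (a := (0, n)) (mem_antidiagonal.mpr (zero_add n))
    _ ≤ besselCoeff ν 0 / n ! := by
        simpa [expHalfCoeff] using hc.le_div_factorial (by linarith) (by linarith)
          (fun m => sum_nonneg (hterm m)) n

lemma summable_norm_besselCoeff_mul_pow (x : ℂ) :
    Summable fun n => ‖(besselCoeff ν n : ℂ) * x ^ n‖ := by
  refine .of_nonneg_of_le (fun _ => norm_nonneg _) (fun n => ?_)
    ((Real.summable_pow_div_factorial ‖x‖).mul_left (besselCoeff ν 0))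
  rw [norm_mul, norm_pow, Complex.norm_real, Real.norm_of_nonneg (besselCoeff_nonneg hν n),
    mul_div_left_comm, mul_comm]
  exact mul_le_mul_of_nonneg_left (besselCoeff_le_div_factorial hν n) (by positivity)

end

lemma exp_half_eq_tsum (x : ℂ) :
    Complex.exp (x / 2) = ∑' i, (expHalfCoeff i : ℂ) * x ^ i := by
  rw [Complex.exp_eq_exp_ℂ, NormedSpace.exp_eq_tsum_div]
  refine tsum_congr fun i => ?_
  simp only [expHalfCoeff, div_pow]
  push_cast
  field_simp

lemma summable_norm_expHalfCoeff_mul_pow (x : ℂ) :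
    Summable fun i => ‖(expHalfCoeff i : ℂ) * x ^ i‖ := by
  refine (Real.summable_pow_div_factorial (‖x‖ / 2)).congr fun i => ?_
  rw [norm_mul, norm_pow, Complex.norm_real, Real.norm_of_nonneg (expHalfCoeff_nonneg i),
    expHalfCoeff, div_pow]
  field_simp

lemma exp_half_mul_tsum_besselCoeff {ν : ℝ} (hν : 0 ≤ ν) (x : ℂ) :
    Complex.exp (x / 2) * ∑' n, (besselCoeff ν n : ℂ) * x ^ n =
      ∑' n, ((∑ p ∈ antidiagonal n, expHalfCoeff p.1 * besselCoeff ν p.2 : ℝ) : ℂ) * x ^ n := by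
  rw [exp_half_eq_tsum, tsum_mul_tsum_eq_tsum_sum_antidiagonal_of_summable_norm
    (summable_norm_expHalfCoeff_mul_pow x) (summable_norm_besselCoeff_mul_pow hν x)]
  refine tsum_congr fun n => ?_
  push_cast
  rw [sum_mul]
  refine sum_congr rfl fun p hp => ?_
  rw [← mem_antidiagonal.mp hp, pow_add]
  ring

lemma Complex.div_ofReal_cpow (x : ℂ) {r : ℝ} (hr : 0 < r) (c : ℂ) :
    (x / r) ^ c = x ^ c / (r : ℂ) ^ c := by
  rcases eq_or_ne x 0 with rfl | hx
  · rcases eq_or_ne c 0 with rfl | hc <;> simp [*]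
  have hr' : (r : ℂ) ≠ 0 := Complex.ofReal_ne_zero.mpr hr.ne'
  rw [Complex.cpow_def_of_ne_zero (div_ne_zero hx hr'), Complex.cpow_def_of_ne_zero hx,
    Complex.cpow_def_of_ne_zero hr', div_eq_mul_inv x, ← Complex.ofReal_inv,
    Complex.log_mul_ofReal _ (inv_pos.mpr hr) _ hx, ← Complex.ofReal_log hr.le, Real.log_inv,
    ← Complex.exp_sub]
  push_cast
  ring_nf

lemma Real.four_rpow_half : (4 : ℝ) ^ (1 / 2 : ℝ) = 2 := by
  rw [← Real.sqrt_eq_rpow, show (4 : ℝ) = 2 ^ 2 by norm_num, Real.sqrt_sq zero_le_two]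

lemma besselI_eq_cpow_mul_tsum (μ : ℝ) {z : ℂ} (hz : z ≠ 0) :
    besselI μ z = (z / 2) ^ (μ : ℂ) *
      ∑' k : ℕ, (z / 2) ^ (2 * k) / (k ! * (Real.Gamma (k + μ + 1) : ℂ)) := by
  rw [besselI, ← tsum_mul_left]
  refine tsum_congr fun k => ?_
  rw [show 2 * (k : ℂ) + μ = μ + (2 * k : ℕ) by push_cast; ring,
    Complex.cpow_add _ _ (div_ne_zero hz two_ne_zero), Complex.cpow_natCast, mul_div_assoc,
    ← Complex.Gamma_ofReal]
  push_cast
  rfl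

lemma cpow_neg_mul_besselI_half (μ : ℝ) {x : ℂ} (hx : x ≠ 0) :
    x ^ (-(μ : ℂ)) * besselI μ (x / 2) = (((4 : ℝ) ^ μ : ℝ) : ℂ)⁻¹ *
      ∑' k : ℕ, x ^ (2 * k) / (4 ^ (2 * k) * k ! * Real.Gamma (k + μ + 1)) := by
  rw [besselI_eq_cpow_mul_tsum μ (div_ne_zero hx two_ne_zero), show x / 2 / 2 = x / (4 : ℝ) by
    push_cast; ring, Complex.div_ofReal_cpow _ four_pos, ← mul_assoc, mul_div_assoc',
    ← Complex.cpow_add _ _ hx, neg_add_cancel, Complex.cpow_zero, one_div,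
    Complex.ofReal_cpow zero_le_four]
  congr 1
  refine tsum_congr fun k => ?_
  push_cast
  rw [div_pow, div_div, mul_assoc]

section

variable {ν : ℝ} {x : ℂ} (hx : x ≠ 0)
include hx

lemma cpow_mul_besselI_sub_half :
    ((Real.sqrt Real.pi / 2 : ℝ) : ℂ) * x ^ ((1 / 2 - ν : ℝ) : ℂ) * besselI (ν - 1 / 2) (x / 2) =
      ((Real.sqrt Real.pi / 4 ^ ν : ℝ) : ℂ) *
        ∑' k : ℕ, (besselCoeff ν (2 * k) : ℂ) * x ^ (2 * k) := by
  rw [mul_assoc, show ((1 / 2 - ν : ℝ) : ℂ) = -((ν - 1 / 2 : ℝ) : ℂ) by push_cast; ring,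
    cpow_neg_mul_besselI_half _ hx, Real.rpow_sub four_pos, Real.four_rpow_half]
  simp only [← tsum_mul_left]
  refine tsum_congr fun k => ?_
  rw [besselCoeff_two_mul, show (k : ℝ) + (ν - 1 / 2) + 1 = k + ν + 1 / 2 by ring]
  push_cast
  field_simp

lemma cpow_mul_besselI_add_half :
    ((Real.sqrt Real.pi / 2 : ℝ) : ℂ) * x ^ ((1 / 2 - ν : ℝ) : ℂ) * besselI (ν + 1 / 2) (x / 2) =
      ((Real.sqrt Real.pi / 4 ^ ν : ℝ) : ℂ) *
        ∑' k : ℕ, (besselCoeff ν (2 * k + 1) : ℂ) * x ^ (2 * k + 1) := by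
  rw [mul_assoc, show ((1 / 2 - ν : ℝ) : ℂ) = 1 + -((ν + 1 / 2 : ℝ) : ℂ) by push_cast; ring,
    Complex.cpow_add _ _ hx, Complex.cpow_one, mul_assoc, cpow_neg_mul_besselI_half _ hx,
    Real.rpow_add four_pos, Real.four_rpow_half]
  simp only [← tsum_mul_left]
  refine tsum_congr fun k => ?_
  rw [besselCoeff_two_mul_add_one, show (k : ℝ) + (ν + 1 / 2) + 1 = k + ν + 1 / 2 + 1 by ring]
  push_cast
  field_simp
  ring

lemma cpow_mul_besselI_add_besselI (hν : 0 ≤ ν) :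
    ((Real.sqrt Real.pi / 2 : ℝ) : ℂ) * x ^ ((1 / 2 - ν : ℝ) : ℂ) *
        (besselI (ν - 1 / 2) (x / 2) + besselI (ν + 1 / 2) (x / 2)) =
      ((Real.sqrt Real.pi / 4 ^ ν : ℝ) : ℂ) * ∑' n, (besselCoeff ν n : ℂ) * x ^ n := by
  have hs := (summable_norm_besselCoeff_mul_pow hν x).of_norm
  have hinj : Function.Injective fun k : ℕ => 2 * k := mul_right_injective₀ two_ne_zero
  have heven : Summable fun k : ℕ => (besselCoeff ν (2 * k) : ℂ) * x ^ (2 * k) :=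
    hs.comp_injective hinj
  have hodd : Summable fun k : ℕ => (besselCoeff ν (2 * k + 1) : ℂ) * x ^ (2 * k + 1) :=
    hs.comp_injective ((add_left_injective 1).comp hinj)
  rw [mul_add, cpow_mul_besselI_sub_half hx, cpow_mul_besselI_add_half hx, ← mul_add,
    tsum_even_add_odd (f := fun n => (besselCoeff ν n : ℂ) * x ^ n) heven hodd]

end

/-- For `ν ≥ 0` and any nonzero complex `x` (principal branch of `x^(1/2-ν)`):
`b_ν(x) = (√π/2) x^(1/2-ν) e^(x/2) [I_{ν-1/2}(x/2) + I_{ν+1/2}(x/2)]`. -/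
theorem bFun_eq_besselI (ν : ℝ) (hν : 0 ≤ ν) (x : ℂ) (hx : x ≠ 0) :
    bFun ν x = ((Real.sqrt Real.pi / 2 : ℝ) : ℂ) * x ^ ((1 / 2 - ν : ℝ) : ℂ) *
      Complex.exp (x / 2) *
      (besselI (ν - 1 / 2) (x / 2) + besselI (ν + 1 / 2) (x / 2)) := by
  calc bFun ν x
      = ((Real.sqrt Real.pi / 4 ^ ν : ℝ) : ℂ) *
          (Complex.exp (x / 2) * ∑' n, (besselCoeff ν n : ℂ) * x ^ n) := by
        rw [bFun_eq_tsum, exp_half_mul_tsum_besselCoeff hν, ← tsum_mul_left,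
          bFunCoeff_eq_sqrt_pi_mul_sum hν]
        push_cast
        simp only [mul_assoc]
    _ = _ := by
        rw [mul_left_comm, ← cpow_mul_besselI_add_besselI hx hν]
        ring
end

section
/- Let m ≥ 2 and n ≥ 0 be integers. For all real x and y: ∫_0^∞ e^{-t} H̃_n^{(m)}(xt, y) dt = H_n^{(m)}(x,y)/n!. -/
open MeasureTheory Set

/-- The higher-order Hermite (Gould–Hopper) polynomials (real arguments):
`H_n^(m)(u,v) = n! ∑_{k=0}^{⌊n/m⌋} u^(n-mk) v^k / ((n-mk)! k!)`. -/
noncomputable def gouldHopper (m n : ℕ) (u v : ℝ) : ℝ :=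
  (n.factorial : ℝ) * ∑ k ∈ Finset.range (n / m + 1),
    u ^ (n - m * k) * v ^ k / (((n - m * k).factorial : ℝ) * (k.factorial : ℝ))

/-- The hybrid polynomials
`H̃_n^(m)(x,y) = ∑_{k=0}^{⌊n/m⌋} x^(n-mk) y^k / (k! ((n-mk)!)²)`. -/
noncomputable def hybridHermite (m n : ℕ) (x y : ℝ) : ℝ :=
  ∑ k ∈ Finset.range (n / m + 1),
    x ^ (n - m * k) * y ^ k / ((k.factorial : ℝ) * ((n - m * k).factorial : ℝ) ^ 2)

/-!
The Borel transform `f ↦ ∫_0^∞ e^{-t} f(t) dt` sends `(xt)^j` to `x^j Γ(j+1) = x^j j!`, so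
applied termwise to the finite sum defining `H̃_n^(m)(xt, y)` it turns each denominator
`((n-mk)!)²` into `(n-mk)!`, which is the `k`-th term of `H_n^(m)(x, y) / n!`.
-/

lemma integrableOn_exp_neg_mul_pow (j : ℕ) :
    IntegrableOn (fun t : ℝ => Real.exp (-t) * t ^ j) (Ioi 0) := by
  refine (Real.GammaIntegral_convergent (by positivity : (0 : ℝ) < j + 1)).congr_fun
    (fun t _ => ?_) measurableSet_Ioi
  simp only [add_sub_cancel_right, Real.rpow_natCast]

lemma integral_exp_neg_mul_pow (j : ℕ) :
    ∫ t in Ioi 0, Real.exp (-t) * t ^ j = j.factorial := by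
  rw [← Real.Gamma_nat_eq_factorial, Real.Gamma_eq_integral (by positivity)]
  refine setIntegral_congr_fun measurableSet_Ioi fun t _ => ?_
  simp only [add_sub_cancel_right, Real.rpow_natCast]

lemma integral_exp_neg_mul_sum_mul_pow {ι : Type*} (s : Finset ι) (e : ι → ℕ) (c : ι → ℝ)
    (x : ℝ) :
    ∫ t in Ioi 0, Real.exp (-t) * ∑ k ∈ s, (x * t) ^ e k * c k
      = ∑ k ∈ s, x ^ e k * (e k).factorial * c k := by
  have hterm (k : ι) (t : ℝ) :
      Real.exp (-t) * ((x * t) ^ e k * c k) = (x ^ e k * c k) * (Real.exp (-t) * t ^ e k) := by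
    ring
  simp_rw [Finset.mul_sum, hterm]
  rw [integral_finsetSum _ fun k _ => (integrableOn_exp_neg_mul_pow (e k)).const_mul _]
  refine Finset.sum_congr rfl fun k _ => ?_
  rw [integral_const_mul, integral_exp_neg_mul_pow]
  ring

theorem borel_transform_hybridHermite_fst_general (m n : ℕ) (x y : ℝ) :
    ∫ t : ℝ in Ioi 0, Real.exp (-t) * hybridHermite m n (x * t) y
      = gouldHopper m n x y / (n.factorial : ℝ) := by
  simp only [hybridHermite, mul_div_assoc]
  rw [integral_exp_neg_mul_sum_mul_pow, gouldHopper,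
    mul_div_cancel_left₀ _ (Nat.cast_ne_zero.mpr n.factorial_ne_zero)]
  refine Finset.sum_congr rfl fun k _ => ?_
  have hj : ((n - m * k).factorial : ℝ) ≠ 0 := Nat.cast_ne_zero.mpr (Nat.factorial_ne_zero _)
  have hk : (k.factorial : ℝ) ≠ 0 := Nat.cast_ne_zero.mpr k.factorial_ne_zero
  field_simp

/-- For `m ≥ 2`, `n ≥ 0` and all real `x, y`, the Borel transform (in the first
variable) of the hybrid polynomial recovers the Gould–Hopper polynomial:
`∫_0^∞ e^{-t} H̃_n^(m)(xt, y) dt = H_n^(m)(x,y)/n!`. -/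
theorem borel_transform_hybridHermite_fst (m n : ℕ) (hm : 2 ≤ m) (x y : ℝ) :
    ∫ t : ℝ in Ioi 0, Real.exp (-t) * hybridHermite m n (x * t) y
      = gouldHopper m n x y / (n.factorial : ℝ) :=
  borel_transform_hybridHermite_fst_general m n x y
end

section
/- Let m ≥ 1 be an integer and let x be real with |x| < 1. Then t ↦ e^{-t} c_0^{(m)}(xt) is integrable on (0,∞) and ∫_0^∞ e^{-t} c_0^{(m)}(xt) dt = 1/(1 + x^m). -/
open MeasureTheory Set

/-- The pseudo-trigonometric function
`c_0^(m)(x) = ∑_r (-1)^r x^(mr) / (mr)!`. -/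
noncomputable def pseudoCos (m : ℕ) (x : ℝ) : ℝ :=
  ∑' r : ℕ, (-1) ^ r * x ^ (m * r) / ((m * r).factorial : ℝ)

lemma gammaAux (n : ℕ) :
    IntegrableOn (fun t : ℝ => Real.exp (-t) * t ^ n) (Ioi 0) ∧
      ∫ t : ℝ in Ioi 0, Real.exp (-t) * t ^ n = (n.factorial : ℝ) := by
  have h0 : (0:ℝ) < (n : ℝ) + 1 := by positivity
  have hcong : ∀ t ∈ Ioi (0:ℝ),
      Real.exp (-t) * t ^ ((n : ℝ) + 1 - 1) = Real.exp (-t) * t ^ n := by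
    intro t _
    rw [show ((n : ℝ) + 1 - 1) = (n : ℝ) by ring, Real.rpow_natCast]
  constructor
  · exact (Real.GammaIntegral_convergent h0).congr_fun hcong measurableSet_Ioi
  · rw [← setIntegral_congr_fun measurableSet_Ioi hcong, ← Real.Gamma_eq_integral h0,
      Real.Gamma_nat_eq_factorial]

lemma pseudoCos_summable_abs {m : ℕ} (hm : 1 ≤ m) (y : ℝ) :
    Summable (fun r : ℕ => |y| ^ (m * r) / ((m * r).factorial : ℝ)) := by
  have hinj : Function.Injective (fun r : ℕ => m * r) := fun a b h => by
    simpa using Nat.eq_of_mul_eq_mul_left (by omega) h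
  exact (Real.summable_pow_div_factorial |y|).comp_injective hinj

lemma pseudoCos_summable {m : ℕ} (hm : 1 ≤ m) (y : ℝ) :
    Summable (fun r : ℕ => (-1) ^ r * y ^ (m * r) / ((m * r).factorial : ℝ)) := by
  apply Summable.of_norm
  refine (pseudoCos_summable_abs hm y).congr fun r => ?_
  simp [abs_div, abs_mul, abs_pow, Nat.abs_cast]

lemma pseudoCos_measurable {m : ℕ} (hm : 1 ≤ m) (x : ℝ) :
    Measurable (fun t : ℝ => pseudoCos m (x * t)) := by
  apply measurable_of_tendsto_metrizable
    (f := fun N t => ∑ r ∈ Finset.range N, (-1) ^ r * (x * t) ^ (m * r) / ((m * r).factorial : ℝ))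
  · intro N
    apply Finset.measurable_sum
    intro r _
    exact ((((measurable_const_mul x).pow_const (m * r)).const_mul _).div_const _)
  · rw [tendsto_pi_nhds]
    intro t
    exact (pseudoCos_summable hm (x * t)).hasSum.tendsto_sum_nat

lemma pseudoCos_abs_le {m : ℕ} (hm : 1 ≤ m) (y : ℝ) :
    |pseudoCos m y| ≤ Real.exp |y| := by
  have hs := pseudoCos_summable_abs hm y
  have hnorm : ∀ r : ℕ, ‖(-1:ℝ) ^ r * y ^ (m * r) / ((m * r).factorial : ℝ)‖
      = |y| ^ (m * r) / ((m * r).factorial : ℝ) := fun r => by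
    simp [abs_div, abs_mul, abs_pow, Nat.abs_cast]
  have h1 : |pseudoCos m y| ≤ ∑' r : ℕ, |y| ^ (m * r) / ((m * r).factorial : ℝ) := by
    rw [pseudoCos, ← Real.norm_eq_abs]
    calc ‖∑' r : ℕ, (-1:ℝ) ^ r * y ^ (m * r) / ((m * r).factorial : ℝ)‖
        ≤ ∑' r : ℕ, ‖(-1:ℝ) ^ r * y ^ (m * r) / ((m * r).factorial : ℝ)‖ :=
          norm_tsum_le_tsum_norm (hs.congr fun r => (hnorm r).symm)
      _ = _ := tsum_congr hnorm
  refine h1.trans ?_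
  rw [Real.exp_eq_exp_ℝ, NormedSpace.exp_eq_tsum_div]
  have hinj : Function.Injective (fun r : ℕ => m * r) := fun a b h => by
    simpa using Nat.eq_of_mul_eq_mul_left (by omega) h
  refine Summable.tsum_le_tsum_of_inj (fun r => m * r) hinj (fun n _ => by positivity)
    (fun r => le_refl _) hs ?_
  exact (Real.summable_pow_div_factorial |y|)

/-- For `m ≥ 1` and real `x` with `|x| < 1`, the function `t ↦ e^{-t} c_0^(m)(xt)`
is integrable on `(0,∞)` and `∫_0^∞ e^{-t} c_0^(m)(xt) dt = 1/(1 + x^m)`. -/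
theorem borel_transform_pseudoCos (m : ℕ) (hm : 1 ≤ m) (x : ℝ) (hx : |x| < 1) :
    IntegrableOn (fun t : ℝ => Real.exp (-t) * pseudoCos m (x * t)) (Ioi 0) ∧
      ∫ t : ℝ in Ioi 0, Real.exp (-t) * pseudoCos m (x * t)
        = 1 / (1 + x ^ m) := by
  have hxm : |x| ^ m < 1 := pow_lt_one₀ (abs_nonneg x) hx (by omega)
  -- Integrability via the bound exp(-(1-|x|)t)
  have hInt : IntegrableOn (fun t : ℝ => Real.exp (-t) * pseudoCos m (x * t)) (Ioi 0) := by
    have hb : (0:ℝ) < 1 - |x| := by linarith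
    refine Integrable.mono' (exp_neg_integrableOn_Ioi 0 hb)
      ((Real.measurable_exp.comp measurable_neg).mul
        (pseudoCos_measurable hm x)).aestronglyMeasurable ?_
    filter_upwards [self_mem_ae_restrict measurableSet_Ioi] with t ht
    have ht' : 0 < t := ht
    have h1 : |pseudoCos m (x * t)| ≤ Real.exp (|x| * t) := by
      have := pseudoCos_abs_le hm (x * t)
      rwa [abs_mul, abs_of_pos ht'] at this
    calc ‖Real.exp (-t) * pseudoCos m (x * t)‖
        = Real.exp (-t) * |pseudoCos m (x * t)| := by
          rw [norm_mul, Real.norm_eq_abs, abs_of_pos (Real.exp_pos _), Real.norm_eq_abs]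
      _ ≤ Real.exp (-t) * Real.exp (|x| * t) := by
          exact mul_le_mul_of_nonneg_left h1 (Real.exp_pos _).le
      _ = Real.exp (-(1 - |x|) * t) := by
          rw [← Real.exp_add]; ring_nf
  refine ⟨hInt, ?_⟩
  -- Term-by-term integration
  set F : ℕ → ℝ → ℝ := fun r t =>
    Real.exp (-t) * ((-1) ^ r * (x * t) ^ (m * r) / ((m * r).factorial : ℝ)) with hF
  have hpt : ∀ t : ℝ, Real.exp (-t) * pseudoCos m (x * t) = ∑' r, F r t := by
    intro t
    rw [pseudoCos, ← tsum_mul_left]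
  have hFr : ∀ r : ℕ, F r = fun t : ℝ =>
      ((-1) ^ r * x ^ (m * r) / ((m * r).factorial : ℝ)) * (Real.exp (-t) * t ^ (m * r)) := by
    intro r
    funext t
    simp only [hF, mul_pow]
    ring
  have hFint : ∀ r : ℕ, IntegrableOn (F r) (Ioi 0) := by
    intro r
    rw [hFr r]
    exact (gammaAux (m * r)).1.const_mul _
  have hFval : ∀ r : ℕ, ∫ t in Ioi 0, F r t = (-(x ^ m)) ^ r := by
    intro r
    rw [hFr r]
    rw [MeasureTheory.integral_const_mul, (gammaAux (m * r)).2]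
    rw [div_mul_cancel₀ _ (by positivity : ((m * r).factorial : ℝ) ≠ 0)]
    conv_rhs => rw [neg_pow, ← pow_mul]
  have hFnorm : ∀ r : ℕ, ∫ t in Ioi 0, ‖F r t‖ = |x| ^ (m * r) := by
    intro r
    have : ∀ t ∈ Ioi (0:ℝ), ‖F r t‖ =
        (|x| ^ (m * r) / ((m * r).factorial : ℝ)) * (Real.exp (-t) * t ^ (m * r)) := by
      intro t ht
      have ht' : (0:ℝ) < t := ht
      rw [hFr r]
      simp only [Real.norm_eq_abs, abs_mul, abs_div, abs_pow, abs_neg, abs_one, one_pow,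
        Nat.abs_cast, abs_of_pos (Real.exp_pos (-t)), abs_of_pos ht']
      ring
    rw [setIntegral_congr_fun measurableSet_Ioi this, MeasureTheory.integral_const_mul,
      (gammaAux (m * r)).2, div_mul_cancel₀ _ (by positivity : ((m * r).factorial : ℝ) ≠ 0)]
  have hsum : Summable fun r : ℕ => ∫ t in Ioi 0, ‖F r t‖ := by
    refine Summable.congr ?_ (fun r => (hFnorm r).symm)
    refine (summable_geometric_of_lt_one (by positivity) hxm).congr fun r => ?_
    rw [pow_mul]
  calc ∫ t in Ioi 0, Real.exp (-t) * pseudoCos m (x * t)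
      = ∫ t in Ioi 0, ∑' r, F r t := by simp_rw [hpt]
    _ = ∑' r, ∫ t in Ioi 0, F r t :=
        (integral_tsum_of_summable_integral_norm hFint hsum).symm
    _ = ∑' r : ℕ, (-(x ^ m)) ^ r := tsum_congr hFval
    _ = 1 / (1 + x ^ m) := by
        rw [tsum_geometric_of_abs_lt_one (by rwa [abs_neg, abs_pow]), sub_neg_eq_add,
          one_div]
end

section
/- Let α > 0 and β > 0 be real, let φ : ℕ → ℂ, and let x ∈ ℂ be such that ∑_{n=0}^∞ |φ(n)| |x|^n/n! < ∞. Define f(u) = ∑_{n=0}^∞ φ(n)(-u)^n/n!. Then u ↦ u^{α-1}(1-u)^{β-1} f(ux) is integrable on (0,1) and ∫_0^1 u^{α-1}(1-u)^{β-1} f(ux) du = ∑_{n=0}^∞ [Ψ(n)/n!] (-x)^n with Ψ(n) = B(α+n, β)·φ(n), where B(a,b) = Γ(a)Γ(b)/Γ(a+b) is the Euler Beta function. -/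
/-!
On `(0, 1]` the `n`-th term of the series for `f (u x)` has modulus at most `|φ n| |x|ⁿ / n!`, a
summable bound independent of `u`. Since the Beta weight `u^(α-1) (1-u)^(β-1)` is integrable,
dominated convergence allows integrating term by term, and the weight times `uⁿ` integrates to
`B(α + n, β)`.
-/

open MeasureTheory Set Filter

section DominatedSeries

variable {X E : Type*} [MeasurableSpace X] {μ : Measure X}
  [NormedAddCommGroup E] [NormedSpace ℝ E] [CompleteSpace E]
  {w : X → ℝ} {g : ℕ → X → E} {C : ℕ → ℝ}

theorem integrable_smul_tsum_of_norm_le (hw : Integrable w μ)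
    (hg : ∀ n, AEStronglyMeasurable (g n) μ) (hC : Summable C)
    (hgC : ∀ n, ∀ᵐ u ∂μ, ‖g n u‖ ≤ C n) :
    Integrable (fun u => w u • ∑' n, g n u) μ := by
  have hsum : ∀ᵐ u ∂μ, ‖∑' n, g n u‖ ≤ ∑' n, C n := by
    filter_upwards [ae_all_iff.2 hgC] with u hu
    exact tsum_of_norm_bounded hC.hasSum hu
  have hmeas : AEStronglyMeasurable (fun u => ∑' n, g n u) μ := by
    refine aestronglyMeasurable_of_tendsto_ae atTop
      (fun N => Finset.aestronglyMeasurable_fun_sum (Finset.range N) fun n _ => hg n) ?_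
    filter_upwards [ae_all_iff.2 hgC] with u hu
    exact (hC.of_norm_bounded hu).hasSum.tendsto_sum_nat
  refine (hw.norm.mul_const (∑' n, C n)).mono' (hw.aestronglyMeasurable.smul hmeas) ?_
  filter_upwards [hsum] with u hu
  rw [norm_smul]
  gcongr

theorem hasSum_integral_smul_tsum_of_norm_le (hw : Integrable w μ)
    (hg : ∀ n, AEStronglyMeasurable (g n) μ) (hC : Summable C)
    (hgC : ∀ n, ∀ᵐ u ∂μ, ‖g n u‖ ≤ C n) :
    HasSum (fun n => ∫ u, w u • g n u ∂μ) (∫ u, w u • ∑' n, g n u ∂μ) := by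
  refine hasSum_integral_of_dominated_convergence (fun n u => ‖w u‖ * C n)
    (fun n => hw.aestronglyMeasurable.smul (hg n)) (fun n => ?_)
    (ae_of_all _ fun u => hC.mul_left _) ?_ ?_
  · filter_upwards [hgC n] with u hu
    rw [norm_smul]
    gcongr
  · simpa only [tsum_mul_left] using hw.norm.mul_const (∑' n, C n)
  · filter_upwards [ae_all_iff.2 hgC] with u hu
    exact (hC.of_norm_bounded hu).hasSum.const_smul (w u)

end DominatedSeries

section BetaKernel

variable {a b : ℝ}

theorem ofReal_rpow_mul_one_sub_rpow {u : ℝ} (hu : u ∈ Icc 0 1) :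
    ((u ^ (a - 1) * (1 - u) ^ (b - 1) : ℝ) : ℂ) =
      (u : ℂ) ^ ((a : ℂ) - 1) * (1 - (u : ℂ)) ^ ((b : ℂ) - 1) := by
  rw [Complex.ofReal_mul, Complex.ofReal_cpow hu.1, Complex.ofReal_cpow (sub_nonneg.2 hu.2)]
  push_cast
  rfl

theorem integrableOn_rpow_mul_one_sub_rpow (ha : 0 < a) (hb : 0 < b) :
    IntegrableOn (fun u : ℝ => u ^ (a - 1) * (1 - u) ^ (b - 1)) (Ioc 0 1) := by
  have h := (intervalIntegrable_iff_integrableOn_Ioc_of_le zero_le_one).1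
    (Complex.betaIntegral_convergent (u := a) (v := b) (by simpa) (by simpa))
  refine IntegrableOn.congr_fun (Integrable.re h) (fun u hu => ?_) measurableSet_Ioc
  simp only [← ofReal_rpow_mul_one_sub_rpow (Ioc_subset_Icc_self hu), RCLike.re_to_complex,
    Complex.ofReal_re]

theorem integral_rpow_mul_one_sub_rpow (ha : 0 < a) (hb : 0 < b) :
    ∫ u in Ioc 0 1, u ^ (a - 1) * (1 - u) ^ (b - 1) = ProbabilityTheory.beta a b := by
  have h := (intervalIntegrable_iff_integrableOn_Ioc_of_le zero_le_one).1
    (Complex.betaIntegral_convergent (u := a) (v := b) (by simpa) (by simpa))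
  rw [ProbabilityTheory.beta_eq_betaIntegralReal a b ha hb, Complex.betaIntegral,
    intervalIntegral.integral_of_le zero_le_one, ← RCLike.re_to_complex, ← integral_re h]
  refine setIntegral_congr_fun measurableSet_Ioc fun u hu => ?_
  simp only [← ofReal_rpow_mul_one_sub_rpow (Ioc_subset_Icc_self hu), RCLike.re_to_complex,
    Complex.ofReal_re]

theorem integral_rpow_mul_one_sub_rpow_mul_pow (ha : 0 < a) (hb : 0 < b) (n : ℕ) :
    ∫ u in Ioc 0 1, u ^ (a - 1) * (1 - u) ^ (b - 1) * u ^ n =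
      ProbabilityTheory.beta (a + n) b := by
  rw [← integral_rpow_mul_one_sub_rpow (by positivity) hb]
  refine setIntegral_congr_fun measurableSet_Ioc fun u hu => ?_
  rw [mul_right_comm, ← Real.rpow_natCast, ← Real.rpow_add hu.1]
  ring_nf

end BetaKernel

/-- **Beta-transform extension of the Borel transform.** If
`∑_n |φ(n)| |x|^n / n! < ∞` and `f(u) = ∑_n φ(n)(-u)^n/n!`, then for `α, β > 0`
the function `u ↦ u^(α-1) (1-u)^(β-1) f(ux)` is integrable on `(0,1)` and
`∫_0^1 u^(α-1) (1-u)^(β-1) f(ux) du = ∑_n [Ψ(n)/n!] (-x)^n` with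
`Ψ(n) = B(α+n,β) φ(n)`, where `B(a,b) = Γ(a)Γ(b)/Γ(a+b)` is the Beta function. -/
theorem beta_transform (α β : ℝ) (hα : 0 < α) (hβ : 0 < β)
    (φ : ℕ → ℂ) (x : ℂ)
    (habs : Summable (fun n : ℕ => ‖φ n‖ * ‖x‖ ^ n / (n.factorial : ℝ)))
    (f : ℂ → ℂ) (hf : ∀ u : ℂ, f u = ∑' n : ℕ, φ n * (-u) ^ n / (n.factorial : ℂ)) :
    IntervalIntegrable
      (fun u : ℝ => ((u ^ (α - 1) * (1 - u) ^ (β - 1) : ℝ) : ℂ) * f (u * x))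
      volume 0 1 ∧
      ∫ u in (0 : ℝ)..1, ((u ^ (α - 1) * (1 - u) ^ (β - 1) : ℝ) : ℂ) * f (u * x)
        = ∑' n : ℕ,
            ((Real.Gamma (α + n) * Real.Gamma β / Real.Gamma (α + β + n) : ℝ) : ℂ) *
              φ n / (n.factorial : ℂ) * (-x) ^ n := by
  set c : ℕ → ℂ := fun n => φ n * (-x) ^ n / n.factorial
  have hterm (n : ℕ) (u : ℝ) : φ n * (-(u * x)) ^ n / n.factorial = (u ^ n : ℝ) • c n := by
    rw [Complex.real_smul, neg_mul_eq_mul_neg, mul_pow]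
    push_cast
    ring
  have hbound (n : ℕ) : ∀ᵐ u : ℝ ∂volume.restrict (Ioc 0 1),
      ‖φ n * (-(u * x)) ^ n / n.factorial‖ ≤ ‖φ n‖ * ‖x‖ ^ n / n.factorial := by
    refine ae_restrict_of_forall_mem measurableSet_Ioc fun u hu => ?_
    have hc : ‖c n‖ = ‖φ n‖ * ‖x‖ ^ n / n.factorial := by simp [c]
    rw [hterm, norm_smul, ← hc, Real.norm_of_nonneg (by positivity [hu.1.le])]
    exact mul_le_of_le_one_left (norm_nonneg _) (pow_le_one₀ hu.1.le hu.2)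
  have hw := integrableOn_rpow_mul_one_sub_rpow hα hβ
  have hg (n : ℕ) : AEStronglyMeasurable (fun u : ℝ => φ n * (-(u * x)) ^ n / n.factorial)
      (volume.restrict (Ioc 0 1)) := (by fun_prop : Continuous _).aestronglyMeasurable
  have hintegrand : (fun u : ℝ => ((u ^ (α - 1) * (1 - u) ^ (β - 1) : ℝ) : ℂ) * f (u * x)) =
      fun u : ℝ =>
        (u ^ (α - 1) * (1 - u) ^ (β - 1)) • ∑' n, φ n * (-(u * x)) ^ n / n.factorial := by
    ext u
    rw [hf, Complex.real_smul]
  rw [intervalIntegrable_iff_integrableOn_Ioc_of_le zero_le_one,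
    intervalIntegral.integral_of_le zero_le_one, hintegrand]
  refine ⟨integrable_smul_tsum_of_norm_le hw hg habs hbound,
    (hasSum_integral_smul_tsum_of_norm_le hw hg habs hbound).tsum_eq.symm.trans
      (tsum_congr fun n => ?_)⟩
  simp_rw [hterm, smul_smul, integral_smul_const, integral_rpow_mul_one_sub_rpow_mul_pow hα hβ n,
    ProbabilityTheory.beta, add_right_comm α _ β, Complex.real_smul, c]
  push_cast
  ring
end
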